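/- Let f : 𝔽₂ⁿ → 𝔽₂, f ≢ 0, have stratified representation with layer sizes k₁, …, k_r and canalizing depth k = k₁ + ⋯ + k_r. Then f is a nested canalizing function (in the sense of Definition 4.3, with respect to some permutation σ ∈ S_n, inputs a₁,…,a_n and outputs b₁,…,b_n) if and only if k = n, i.e., every variable of f appears in one of the layers M₁, …, M_r and the core polynomial p_C contains no variables. -/

import Mathlib

/-! An NCF is essential in every variable, and fixing some but not all of its variables leaves a
canalizing function: the first variable, in the NCF order, that is free or fixed at its
canalizing input canalizes the restriction. If a variable `v` lies in no layer, fix every layer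
variable so that all layers evaluate to `1`; what remains is the core `p_C` plus a constant, so
`p_C` is canalizing, hence `p_C ≡ 1`, and then `f` does not depend on `v`. Conversely, if the
layers cover all variables, `p_C` is constant, hence `≡ 1`, and listing the variables layer by
layer exhibits `f` as an NCF whose output for a first hit in layer `m` is `m + q`. -/

/-- A Boolean function `f` is essential in (depends on) the variable `v` if flipping
the value of `v` can change the value of `f`. -/
def EssentialIn {V : Type*} [DecidableEq V] (f : (V → ZMod 2) → ZMod 2) (v : V) : Prop :=
  ∃ x, f x ≠ f (Function.update x v (x v + 1))

/-- A Boolean function is canalizing if some variable `v` has an input value `a` that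
forces the output value `b`. -/
def IsCanalizing {V : Type*} (f : (V → ZMod 2) → ZMod 2) : Prop :=
  ∃ (v : V) (a b : ZMod 2), ∀ x, x v = a → f x = b

/-- The extended monomial on the variable set `S` with constants `a`,
`M(x) = ∏_{j ∈ S} (x_j + a_j)`. -/
def extMonomial {V : Type*} (S : Finset V) (a : V → ZMod 2) (x : V → ZMod 2) : ZMod 2 :=
  ∏ j ∈ S, (x j + a j)

/-- The nested form `M₁(M₂(⋯(M_{r-1}(M_r·p + 1) + 1)⋯) + 1)` determined by a list of
layers (variable sets) `L`, constants `a`, and a core polynomial `p`. For `L = []` it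
is just `p`. -/
def nestedLayers {V : Type*} (a : V → ZMod 2) (p : (V → ZMod 2) → ZMod 2) :
    List (Finset V) → (V → ZMod 2) → ZMod 2
  | [], x => p x
  | [S], x => extMonomial S a x * p x
  | S :: T :: Ss, x => extMonomial S a x * (nestedLayers a p (T :: Ss) x + 1)

/-- `IsStratification f L a p q` says that
`f = M₁(M₂(⋯(M_{r-1}(M_r·p_C + 1) + 1)⋯) + 1) + q` is a representation of `f` as in
the He–Macauley stratification theorem: the layers `Mᵢ = ∏_{j ∈ Sᵢ} (x_j + a_j)` are
nonconstant extended monomials in pairwise disjoint variable sets, the core polynomial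
`p` is independent of all layer variables and is identically `1` or non-canalizing,
and the exceptional-case conditions hold (if `p ≡ 1` and `r ≠ 1` then `k_r ≥ 2`; if
`p ≡ 1`, `r = 1`, `k₁ = 1` then `q = 0`; and for `r = 0` the representation is
`f = p_C`, i.e. `q = 0`). -/
def IsStratification {V : Type*} [DecidableEq V] (f : (V → ZMod 2) → ZMod 2)
    (L : List (Finset V)) (a : V → ZMod 2) (p : (V → ZMod 2) → ZMod 2) (q : ZMod 2) :
    Prop :=
  (∀ S ∈ L, S.Nonempty) ∧
  L.Pairwise Disjoint ∧
  (∀ S ∈ L, ∀ v ∈ S, ¬ EssentialIn p v) ∧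
  (p = (fun _ => 1) ∨ ¬ IsCanalizing p) ∧
  (p = (fun _ => 1) → L.length ≠ 1 → ∀ S ∈ L.getLast?, 2 ≤ S.card) ∧
  (p = (fun _ => 1) → ∀ S, L = [S] → S.card = 1 → q = 0) ∧
  (L = [] → q = 0) ∧
  f = fun x => nestedLayers a p L x + q

/-- `f` is nested canalizing with respect to the permutation `σ`, canalizing inputs
`A` and canalized outputs `B` (Definition 4.3): if `i` is the first index (in the
order given by `σ`) whose variable receives its canalizing input, then `f x = B i`,
and if no variable receives its canalizing input then `f x = 1 + B n` (`B` at the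
maximal index). -/
def IsNCF {n : ℕ} (f : (Fin n → ZMod 2) → ZMod 2) (σ : Equiv.Perm (Fin n))
    (A B : Fin n → ZMod 2) : Prop :=
  (∀ x (i : Fin n), (∀ j : Fin n, j < i → x (σ j) ≠ A j) → x (σ i) = A i → f x = B i) ∧
  (∀ x, (∀ i : Fin n, x (σ i) ≠ A i) → ∀ i : Fin n, (∀ j : Fin n, j ≤ i) → f x = 1 + B i)


namespace ZMod2

theorem eq_or_eq_add_one (u w : ZMod 2) : u = w ∨ u = w + 1 := by revert u w; decide

theorem add_eq_one_of_ne {u w : ZMod 2} (h : u ≠ w) : u + w = 1 := by revert u w; decide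

theorem ne_one_add (u : ZMod 2) : u ≠ 1 + u := by revert u; decide

theorem add_one_add_one (u : ZMod 2) : u + 1 + 1 = u := by revert u; decide

theorem add_add_cancel_right (u w : ZMod 2) : u + w + w = u := by revert u w; decide

end ZMod2

section Essential

variable {V : Type*} [DecidableEq V] {g : (V → ZMod 2) → ZMod 2}

theorem not_essentialIn_iff {v : V} :
    ¬ EssentialIn g v ↔ ∀ x c, g (Function.update x v c) = g x := by
  refine ⟨fun h x c => ?_, fun h ⟨x, hx⟩ => hx (h x _).symm⟩
  rcases ZMod2.eq_or_eq_add_one c (x v) with rfl | rfl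
  · rw [Function.update_eq_self]
  · exact not_not.1 (not_exists.1 h x) |>.symm

theorem apply_eq_of_not_essentialIn {T : Finset V} (hT : ∀ v ∈ T, ¬ EssentialIn g v)
    {x y : V → ZMod 2} (hxy : ∀ v ∉ T, x v = y v) : g x = g y := by
  induction T using Finset.induction_on generalizing x with
  | empty => rw [funext fun v => hxy v (Finset.notMem_empty v)]
  | insert v T hvT ih =>
    rw [← not_essentialIn_iff.1 (hT v (Finset.mem_insert_self v T)) x (y v)]
    refine ih (fun w hw => hT w (Finset.mem_insert_of_mem hw)) fun w hw => ?_
    rcases eq_or_ne w v with rfl | hwv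
    · exact Function.update_self ..
    · rw [Function.update_of_ne hwv]
      exact hxy w (by simp [hwv, hw])

theorem eq_one_of_forall_not_essentialIn [Fintype V] [Nonempty V]
    (hg : g = (fun _ => 1) ∨ ¬ IsCanalizing g) (hess : ∀ v, ¬ EssentialIn g v) :
    g = fun _ => 1 :=
  hg.resolve_right fun hnc => hnc ⟨Classical.arbitrary V, 0, g 0, fun _ _ =>
    apply_eq_of_not_essentialIn (T := Finset.univ) (fun v _ => hess v) (by simp)⟩

end Essential

section Layers

variable {V : Type*} {a : V → ZMod 2} {p : (V → ZMod 2) → ZMod 2} {x y : V → ZMod 2}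

theorem extMonomial_eq_one {S : Finset V} (h : ∀ v ∈ S, x v ≠ a v) : extMonomial S a x = 1 :=
  Finset.prod_eq_one fun v hv => ZMod2.add_eq_one_of_ne (h v hv)

theorem extMonomial_eq_zero {S : Finset V} {v : V} (hv : v ∈ S) (h : x v = a v) :
    extMonomial S a x = 0 :=
  Finset.prod_eq_zero hv (by rw [h]; exact CharTwo.add_self_eq_zero _)

theorem nestedLayers_congr {L : List (Finset V)} (hL : ∀ S ∈ L, ∀ v ∈ S, x v = y v)
    (hp : p x = p y) : nestedLayers a p L x = nestedLayers a p L y := by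
  have hM : ∀ S ∈ L, extMonomial S a x = extMonomial S a y := fun S hS =>
    Finset.prod_congr rfl fun v hv => by rw [hL S hS v hv]
  induction L with
  | nil => exact hp
  | cons S M ih =>
    cases M with
    | nil => simp only [nestedLayers, hM S (by simp), hp]
    | cons T Ts =>
      simp only [nestedLayers, hM S (by simp)]
      rw [ih (fun U hU => hL U (by simp [hU])) (fun U hU => hM U (by simp [hU]))]

/-- The truncated subtraction `L.length - 1` also covers `L = []`, where the value is `p x`. -/
theorem nestedLayers_of_forall_eq_one {L : List (Finset V)}
    (h : ∀ S ∈ L, extMonomial S a x = 1) :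
    nestedLayers a p L x = p x + ((L.length - 1 : ℕ) : ZMod 2) := by
  induction L with
  | nil => simp [nestedLayers]
  | cons S M ih =>
    cases M with
    | nil => simp [nestedLayers, h S (by simp)]
    | cons T Ts =>
      simp only [nestedLayers, h S (by simp), one_mul]
      rw [ih (fun U hU => h U (by simp [hU]))]
      simp only [List.length_cons, Nat.add_sub_cancel]
      push_cast
      ring

theorem nestedLayers_of_first_eq_zero {L : List (Finset V)} {k : ℕ} (hk : k < L.length)
    (hone : ∀ m (hm : m < k), extMonomial L[m] a x = 1) (hzero : extMonomial L[k] a x = 0) :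
    nestedLayers a p L x = k := by
  induction L generalizing k with
  | nil => simp at hk
  | cons S M ih =>
    cases k with
    | zero =>
      cases M <;> simp_all [nestedLayers]
    | succ k =>
      obtain ⟨T, Ts, rfl⟩ := List.exists_cons_of_length_pos (by simp at hk; omega : 0 < M.length)
      have hS : extMonomial S a x = 1 := hone 0 (by omega)
      simp only [nestedLayers, hS, one_mul]
      rw [ih (by simpa using hk) (fun m hm => hone (m + 1) (by omega)) hzero]
      push_cast
      ring

end Layers

section Cover

variable {V : Type*} [DecidableEq V]

theorem sum_map_card_eq_card_iff [Fintype V] {L : List (Finset V)} (hL : L.Pairwise Disjoint) :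
    (L.map Finset.card).sum = Fintype.card V ↔ ∀ v, ∃ S ∈ L, v ∈ S := by
  have hnodup : (L.flatMap Finset.toList).Nodup :=
    List.nodup_flatMap.2 ⟨fun S _ => S.nodup_toList, hL.imp fun h v hv hv' =>
      Finset.disjoint_left.1 h (Finset.mem_toList.1 hv) (Finset.mem_toList.1 hv')⟩
  have hcard : (L.map Finset.card).sum = (L.flatMap Finset.toList).toFinset.card := by
    simp [List.toFinset_card_of_nodup hnodup, List.length_flatMap]
  rw [hcard, Finset.card_eq_iff_eq_univ, Finset.eq_univ_iff_forall]
  simp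

/-- Equals `L.length` when `v` lies in no layer. -/
def layerIndex (L : List (Finset V)) (v : V) : ℕ := L.findIdx (v ∈ ·)

theorem layerIndex_lt_length {L : List (Finset V)} {v : V} (h : ∃ S ∈ L, v ∈ S) :
    layerIndex L v < L.length :=
  List.findIdx_lt_length_of_exists (by simpa using h)

theorem mem_getElem_layerIndex {L : List (Finset V)} {v : V} (h : layerIndex L v < L.length) :
    v ∈ L[layerIndex L v] :=
  of_decide_eq_true (List.findIdx_getElem (w := h))

theorem layerIndex_eq {L : List (Finset V)} (hL : L.Pairwise Disjoint) {m : ℕ}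
    (hm : m < L.length) {v : V} (hv : v ∈ L[m]) : layerIndex L v = m := by
  have hle : layerIndex L v ≤ m := by
    by_contra! hlt
    simpa [hv] using List.not_of_lt_findIdx hlt
  refine hle.antisymm (not_lt.1 fun hlt => ?_)
  exact Finset.disjoint_left.1 (List.pairwise_iff_getElem.1 hL _ _ _ hm hlt)
    (mem_getElem_layerIndex (hle.trans_lt hm)) hv

end Cover

namespace IsNCF

variable {n : ℕ} {f : (Fin n → ZMod 2) → ZMod 2} {σ : Equiv.Perm (Fin n)} {A B : Fin n → ZMod 2}

theorem apply_update_eq (hf : IsNCF f σ A B) {x : Fin n → ZMod 2} {i : Fin n}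
    (hx : ∀ j < i, x (σ j) ≠ A j) : f (Function.update x (σ i) (A i)) = B i :=
  hf.1 _ i (fun j hj => by rw [Function.update_of_ne (σ.injective.ne hj.ne)]; exact hx j hj)
    (Function.update_self ..)

theorem essentialIn (hf : IsNCF f σ A B) (i : Fin n) : EssentialIn f (σ i) := by
  have : Nonempty (Fin n) := ⟨i⟩
  obtain ⟨top, htop⟩ : ∃ top : Fin n, ∀ j, j ≤ top := Finite.exists_max id
  set miss : Fin n → ZMod 2 := fun v => A (σ.symm v) + 1
  have hmiss : ∀ j, miss (σ j) ≠ A j := fun j => by simp [miss]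
  have hflip : ∀ y : Fin n → ZMod 2, y (σ i) = miss (σ i) →
      Function.update y (σ i) (y (σ i) + 1) = Function.update y (σ i) (A i) := fun y hy => by
    simp [hy, miss, ZMod2.add_one_add_one]
  by_cases hB : B i = 1 + B top
  · -- flipping `σ i` turns a first hit at `top` into a first hit at `i`
    have hi : i < top := (htop i).lt_of_ne fun h => ZMod2.ne_one_add (B i) (by rwa [← h] at hB)
    have hupd : ∀ j ≠ top, Function.update miss (σ top) (A top) (σ j) = miss (σ j) := fun j hj =>
      Function.update_of_ne (σ.injective.ne hj) _ _
    have hhit_top : f (Function.update miss (σ top) (A top)) = B top :=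
      hf.apply_update_eq fun j _ => hmiss j
    have hhit_i : f (Function.update (Function.update miss (σ top) (A top)) (σ i) (A i)) = B i :=
      hf.apply_update_eq fun j hj => hupd j (hj.trans hi).ne ▸ hmiss j
    refine ⟨Function.update miss (σ top) (A top), ?_⟩
    rw [hflip _ (hupd i hi.ne), hhit_top, hhit_i, hB]
    exact ZMod2.ne_one_add _
  · refine ⟨miss, ?_⟩
    rw [hflip _ rfl, hf.2 miss hmiss top htop, hf.apply_update_eq fun j _ => hmiss j]
    exact Ne.symm hB

theorem isCanalizing_piecewise (hf : IsNCF f σ A B) {T : Finset (Fin n)} {v : Fin n}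
    (hv : v ∉ T) (y : Fin n → ZMod 2) : IsCanalizing fun x => f (T.piecewise y x) := by
  obtain ⟨i, hi, hmin⟩ := wellFounded_lt.has_min {i | σ i ∉ T ∨ y (σ i) = A i}
    ⟨σ.symm v, by simp [hv]⟩
  refine ⟨σ i, A i, B i, fun x hx => hf.1 _ i (fun j hj => ?_) ?_⟩
  · obtain ⟨hjT, hjA⟩ : σ j ∈ T ∧ y (σ j) ≠ A j := by
      simpa [not_or] using mt (hmin j) (not_not.2 hj)
    rwa [T.piecewise_eq_of_mem _ _ hjT]
  · by_cases hiT : σ i ∈ T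
    · rw [T.piecewise_eq_of_mem _ _ hiT]
      exact hi.resolve_left (not_not.2 hiT)
    · rwa [T.piecewise_eq_of_notMem _ _ hiT]

end IsNCF

section Stratification

variable {n : ℕ} {L : List (Finset (Fin n))} {a : Fin n → ZMod 2}
  {p : (Fin n → ZMod 2) → ZMod 2} {q : ZMod 2}

theorem exists_mem_layer_of_isNCF (hp_ess : ∀ S ∈ L, ∀ v ∈ S, ¬ EssentialIn p v)
    (hp : p = (fun _ => 1) ∨ ¬ IsCanalizing p) {σ : Equiv.Perm (Fin n)} {A B : Fin n → ZMod 2}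
    (hf : IsNCF (fun x => nestedLayers a p L x + q) σ A B) (v : Fin n) : ∃ S ∈ L, v ∈ S := by
  by_contra hv
  set T := (L.flatMap Finset.toList).toFinset
  have hT : ∀ w, w ∈ T ↔ ∃ S ∈ L, w ∈ S := by simp [T]
  have hrestrict : ∀ x, nestedLayers a p L (T.piecewise (a + 1) x) + q
      = p x + (((L.length - 1 : ℕ) : ZMod 2) + q) := by
    intro x
    have hlayer : ∀ S ∈ L, ∀ w ∈ S, T.piecewise (a + 1) x w = a w + 1 := fun S hS w hw =>
      T.piecewise_eq_of_mem _ _ ((hT w).2 ⟨S, hS, hw⟩)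
    have hp_free : p (T.piecewise (a + 1) x) = p x :=
      apply_eq_of_not_essentialIn (fun w hw => ?_) fun w hw => T.piecewise_eq_of_notMem _ _ hw
    · rw [nestedLayers_of_forall_eq_one fun S hS => extMonomial_eq_one fun w hw => ?_, hp_free,
        add_assoc]
      simp [hlayer S hS w hw]
    · obtain ⟨S, hS, hwS⟩ := (hT w).1 hw
      exact hp_ess S hS w hwS
  have hcan : IsCanalizing p := by
    obtain ⟨w, c, b, hb⟩ := hf.isCanalizing_piecewise (mt (hT v).1 hv) (a + 1)
    exact ⟨w, c, b + (((L.length - 1 : ℕ) : ZMod 2) + q), fun x hx => by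
      rw [← hb x hx]
      beta_reduce
      rw [hrestrict, ZMod2.add_add_cancel_right]⟩
  have hp1 := hp.resolve_right (not_not.2 hcan)
  have hv_free : ¬ EssentialIn (fun x => nestedLayers a p L x + q) v := by
    refine not_essentialIn_iff.2 fun x c => ?_
    have hlayers : ∀ S ∈ L, ∀ w ∈ S, Function.update x v c w = x w := fun S hS w hw =>
      Function.update_of_ne (fun (hwv : w = v) => hv ⟨S, hS, hwv ▸ hw⟩) _ _
    rw [nestedLayers_congr hlayers (by rw [hp1])]
  exact hv_free (σ.apply_symm_apply v ▸ hf.essentialIn (σ.symm v))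

theorem isNCF_of_forall_exists_mem_layer (hne : ∀ S ∈ L, S.Nonempty) (hdisj : L.Pairwise Disjoint)
    (hp : p = (fun _ => 1) ∨ ¬ IsCanalizing p) (hp_ess : ∀ S ∈ L, ∀ v ∈ S, ¬ EssentialIn p v)
    (hcover : ∀ v, ∃ S ∈ L, v ∈ S) :
    IsNCF (fun x => nestedLayers a p L x + q) (Tuple.sort (layerIndex L))
      (fun i => a (Tuple.sort (layerIndex L) i))
      (fun i => (layerIndex L (Tuple.sort (layerIndex L) i) : ZMod 2) + q) := by
  set σ := Tuple.sort (layerIndex L)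
  have hmono : Monotone (layerIndex L ∘ σ) := Tuple.monotone_sort _
  have hσ : ∀ v, layerIndex L v = layerIndex L (σ (σ.symm v)) := fun v => by simp
  constructor
  · intro x i hmiss hhit
    have hk := layerIndex_lt_length (hcover (σ i))
    refine congrArg (· + q) (nestedLayers_of_first_eq_zero hk (fun m hm => ?_)
      (extMonomial_eq_zero (mem_getElem_layerIndex hk) hhit))
    refine extMonomial_eq_one fun w hw => ?_
    have hlt : layerIndex L (σ (σ.symm w)) < layerIndex L (σ i) := by
      rwa [← hσ, layerIndex_eq hdisj _ hw]
    simpa using hmiss _ (hmono.reflect_lt hlt)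
  · intro x hmiss top htop
    have : Nonempty (Fin n) := ⟨top⟩
    have hL : L ≠ [] := fun h => by simpa [h] using hcover top
    have hp1 : p = fun _ => 1 :=
      eq_one_of_forall_not_essentialIn hp fun v => by
        obtain ⟨S, hS, hvS⟩ := hcover v
        exact hp_ess S hS v hvS
    obtain ⟨w, hw⟩ := hne _ (L.getLast_mem hL)
    rw [List.getLast_eq_getElem] at hw
    have htop_index : layerIndex L (σ top) = L.length - 1 := by
      refine Nat.le_antisymm (Nat.le_sub_one_of_lt (layerIndex_lt_length (hcover _))) ?_
      calc L.length - 1 = layerIndex L (σ (σ.symm w)) := by rw [← hσ, layerIndex_eq hdisj _ hw]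
        _ ≤ layerIndex L (σ top) := hmono (htop _)
    show nestedLayers a p L x + q = 1 + ((layerIndex L (σ top) : ZMod 2) + q)
    rw [nestedLayers_of_forall_eq_one fun S _ => extMonomial_eq_one fun v _ => ?_, hp1,
      htop_index, add_assoc]
    simpa using hmiss (σ.symm v)

end Stratification

theorem stmt_12_general (n : ℕ) (f : (Fin n → ZMod 2) → ZMod 2)
    (L : List (Finset (Fin n))) (a : Fin n → ZMod 2)
    (p : (Fin n → ZMod 2) → ZMod 2) (q : ZMod 2)
    (h : IsStratification f L a p q) :
    (∃ (σ : Equiv.Perm (Fin n)) (A B : Fin n → ZMod 2), IsNCF f σ A B) ↔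
      (L.map Finset.card).sum = n := by
  obtain ⟨hne, hdisj, hp_ess, hp, -, -, -, rfl⟩ := h
  have hcover := sum_map_card_eq_card_iff hdisj
  rw [Fintype.card_fin] at hcover
  rw [hcover]
  constructor
  · rintro ⟨σ, A, B, hf⟩
    exact exists_mem_layer_of_isNCF hp_ess hp hf
  · intro hcov
    exact ⟨_, _, _, isNCF_of_forall_exists_mem_layer hne hdisj hp hp_ess hcov⟩

/-- A Boolean function `f ≢ 0` with stratified representation with
layers `L` (of sizes `k₁, …, k_r`) is a nested canalizing function if and only if its
canalizing depth `k = k₁ + ⋯ + k_r` equals `n`, i.e., every variable appears in one of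
the layers. -/
theorem stmt_12 (n : ℕ) (f : (Fin n → ZMod 2) → ZMod 2) (hf : f ≠ fun _ => 0)
    (L : List (Finset (Fin n))) (a : Fin n → ZMod 2)
    (p : (Fin n → ZMod 2) → ZMod 2) (q : ZMod 2)
    (h : IsStratification f L a p q) :
    (∃ (σ : Equiv.Perm (Fin n)) (A B : Fin n → ZMod 2), IsNCF f σ A B) ↔
      (L.map Finset.card).sum = n :=
  stmt_12_general n f L a p q h
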